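/- Let (O, I, R) be a formal context and let minsupp ∈ ℕ. If X ⊆ I is a frequent itemset (Supp(X) ≥ minsupp), then the set {G ⊆ X : G a minimal generator with Supp(G) ≥ minsupp} is nonempty and Supp(X) = min{Supp(G) : G ⊆ X, G a minimal generator with Supp(G) ≥ minsupp}. Hence the frequent minimal generators with their supports recover the support of every frequent itemset. -/
import Mathlib


open Finset

variable {O ι : Type*}

/-- The extent of an itemset `X`: objects possessing every item of `X`. -/
def extent [Fintype O] (R : O → ι → Prop) [∀ o i, Decidable (R o i)]
    (X : Finset ι) : Finset O :=
  univ.filter fun o => ∀ i ∈ X, R o i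

/-- The (conjunctive) support of an itemset `X`. -/
def supp [Fintype O] (R : O → ι → Prop) [∀ o i, Decidable (R o i)]
    (X : Finset ι) : ℕ :=
  (extent R X).card

/-- An itemset `G` is a minimal generator if no proper subset has the same support. -/
def IsMinGen [Fintype O] (R : O → ι → Prop) [∀ o i, Decidable (R o i)]
    (G : Finset ι) : Prop :=
  ∀ G' ⊂ G, supp R G' ≠ supp R G



lemma supp_anti [Fintype O] (R : O → ι → Prop) [∀ o i, Decidable (R o i)]
    {A B : Finset ι} (h : A ⊆ B) : supp R B ≤ supp R A := by
  apply Finset.card_le_card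
  intro o ho
  simp only [extent, Finset.mem_filter] at *
  exact ⟨ho.1, fun i hi => ho.2 i (h hi)⟩

lemma exists_minGen [Fintype O] (R : O → ι → Prop) [∀ o i, Decidable (R o i)]
    (X : Finset ι) : ∃ G ⊆ X, IsMinGen R G ∧ supp R G = supp R X := by
  obtain ⟨G, hG, hmin⟩ := Finset.exists_min_image
    ((X.powerset).filter fun G => supp R G = supp R X) Finset.card
    ⟨X, by simp⟩
  simp only [Finset.mem_filter, Finset.mem_powerset] at hG
  refine ⟨G, hG.1, ?_, hG.2⟩
  intro G' hG' heq
  have hsub : G' ⊆ X := hG'.1.trans hG.1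
  have := hmin G' (by simp [Finset.mem_filter, Finset.mem_powerset, hsub, heq, hG.2])
  exact absurd (Finset.card_lt_card hG') (not_lt.2 this)

/-- The frequent minimal generators with their supports recover the support of
every frequent itemset. -/
theorem frequent_minGen_exact_representation
    [Fintype O] (R : O → ι → Prop) [∀ o i, Decidable (R o i)]
    (minsupp : ℕ) (X : Finset ι) (hX : minsupp ≤ supp R X) :
    (∃ G ⊆ X, IsMinGen R G ∧ minsupp ≤ supp R G) ∧
    IsLeast {n : ℕ | ∃ G, G ⊆ X ∧ IsMinGen R G ∧ minsupp ≤ supp R G ∧ n = supp R G}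
      (supp R X) := by

  obtain ⟨G, hGX, hmg, hs⟩ := exists_minGen R X
  refine ⟨⟨G, hGX, hmg, hs ▸ hX⟩, ⟨G, hGX, hmg, hs ▸ hX, hs.symm⟩, ?_⟩
  rintro n ⟨G', hG'X, -, -, rfl⟩
  exact supp_anti R hG'X
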